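/- For every constant c₁ > 0 there exists a constant C > 0 such that the following holds for all sufficiently large n a power of 2 and any Δ a power of two with 2 ≤ Δ ≤ log^{c₁} n and Δ < n. If A is a multiset of C·log log N elements chosen uniformly at random with replacement from [n]^d × [n]^d, then with probability at least 1 − 1/log⁴ N, for every coordinate s ∈ {1,…,d} the multiset A ⋆ (𝟎, e_s) is Δ-balanced in coordinate s. -/

import Mathlib

/- STATEMENT 5: For every constant c₁ > 0 there exists C > 0 such that for all sufficiently
   large n a power of 2 and any Δ a power of two with 2 ≤ Δ ≤ log^{c₁} n and Δ < n: if A is a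
   multiset of C·log log N elements chosen uniformly at random with replacement from
   [n]^d × [n]^d, then with probability ≥ 1 − 1/log⁴ N, for every s ∈ [d] the multiset
   A ⋆ (𝟎, e_s) is Δ-balanced in coordinate s. -/

open scoped BigOperators Classical
open Finset

/-- the ⋆ operation on pairs of vectors in [n]^d × [n]^d -/
def star {n d : ℕ} (a v : (Fin d → ZMod n) × (Fin d → ZMod n)) : Fin d → ZMod n :=
  fun i => a.1 i * v.1 i + a.2 i * v.2 i

/-- ω_Δ = e^{2πi/Δ} -/
noncomputable def rootΔ (Δ : ℕ) : ℂ := Complex.exp (2 * (Real.pi : ℂ) * Complex.I / (Δ : ℂ))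

/-- a multiset (given as a tuple Z) of elements of [n]^d is Δ-balanced in coordinate s:
    for every r ∈ {1,…,Δ−1}, at least a 49/100 fraction of the elements of
    {ω_Δ^{r·z_s} : z ∈ Z} lie in the half-plane {u : Re u ≤ 0}. -/
noncomputable def balanced {n d m : ℕ} (Δ : ℕ) (Z : Fin m → (Fin d → ZMod n)) (s : Fin d) :
    Prop :=
  ∀ r : ℕ, 1 ≤ r → r ≤ Δ - 1 →
    (49 / 100 : ℝ) * m ≤
      ((Finset.univ.filter
          (fun j : Fin m => ((rootΔ Δ) ^ (r * ((Z j) s).val)).re ≤ 0)).card : ℝ)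

/-! Fix a coordinate `s` and `1 ≤ r < Δ`. Since `Δ` is a power of two dividing `n`, there is a
shift `c` with `ω_Δ ^ (r c) = -1`; translating `a_s` by `c` negates `ω_Δ ^ (r a_s)`, so at least
half of all `a` put it in the closed left half-plane. A Chernoff bound then makes a sample of size
`m` miss the `49/100` threshold with probability at most `(1 - 1/20000) ^ m`, and a union bound
over the `d Δ` pairs `(s, r)` leaves failure probability `d Δ (1 - 1/20000) ^ m ≤ log⁻⁴ N` as soon
as `m ≥ 20000 (c₁ + 5) log log N`, because `d ≤ log N` and `Δ ≤ log^c₁ N`. -/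

lemma isPrimitiveRoot_rootΔ {Δ : ℕ} (hΔ : Δ ≠ 0) : IsPrimitiveRoot (rootΔ Δ) Δ :=
  Complex.isPrimitiveRoot_exp Δ hΔ

/-- Writing `r = 2 ^ v * u` with `u` odd, take `c = 2 ^ (k - 1 - v)`: then `r * c = u * 2 ^ (k - 1)`
and `ζ ^ 2 ^ (k - 1) = -1`. -/
lemma IsPrimitiveRoot.exists_pow_pow_eq_neg_one {R : Type*} [CommRing R] [IsDomain R] {ζ : R}
    {k r : ℕ} (hζ : IsPrimitiveRoot ζ (2 ^ k)) (hr0 : r ≠ 0) (hr : r < 2 ^ k) :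
    ∃ c : ℕ, (ζ ^ r) ^ c = -1 := by
  obtain ⟨v, u, hu, rfl⟩ := Nat.exists_eq_two_pow_mul_odd hr0
  have hvk : v < k :=
    (Nat.pow_lt_pow_iff_right (by norm_num)).mp
      ((Nat.le_mul_of_pos_right _ hu.pos).trans_lt hr)
  have hhalf : ζ ^ 2 ^ (k - 1) = -1 := by
    have h := hζ.pow_of_dvd (p := 2 ^ (k - 1)) (by positivity) (pow_dvd_pow 2 (Nat.sub_le k 1))
    rw [Nat.pow_div (Nat.sub_le k 1) two_pos, Nat.sub_sub_self (by omega), pow_one] at h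
    exact h.eq_neg_one_of_two_right
  refine ⟨2 ^ (k - 1 - v), ?_⟩
  rw [← pow_mul, mul_right_comm, ← pow_add, Nat.add_sub_cancel' (by omega), pow_mul, hhalf,
    hu.neg_one_pow]

lemma ZMod.pow_val_add {M : Type*} [Monoid M] {n : ℕ} [NeZero n] {ζ : M} (hζ : ζ ^ n = 1)
    (x y : ZMod n) : ζ ^ (x + y).val = ζ ^ x.val * ζ ^ y.val := by
  rw [ZMod.val_add, ← pow_eq_pow_mod _ hζ, pow_add]

lemma ZMod.pow_val_natCast {M : Type*} [Monoid M] {n : ℕ} {ζ : M} (hζ : ζ ^ n = 1) (c : ℕ) :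
    ζ ^ (c : ZMod n).val = ζ ^ c := by
  rw [ZMod.val_natCast, ← pow_eq_pow_mod _ hζ]

lemma Finset.cast_card_filter_add_cast_card_filter_not {α : Type*} [Fintype α] (p : α → Prop)
    [DecidablePred p] : (#{x | p x} : ℝ) + #{x | ¬ p x} = Fintype.card α := by
  rw [← card_univ]
  exact_mod_cast card_filter_add_card_filter_not (s := univ) fun x => p x

lemma Finset.card_le_two_mul_card_filter_of_add {G : Type*} [AddGroup G] [Fintype G]
    (p : G → Prop) [DecidablePred p] (g : G) (h : ∀ x, ¬ p x → p (x + g)) :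
    Fintype.card G ≤ 2 * #{x | p x} := by
  have hle : #{x | ¬ p x} ≤ #{x | p x} :=
    card_le_card_of_injOn (· + g) (fun x hx => by simpa using h x (by simpa using hx))
      (add_left_injective g).injOn
  have hsplit := card_filter_add_card_filter_not (s := univ) fun x => p x
  rw [card_univ] at hsplit
  omega

lemma card_le_two_mul_card_filter_re_pow_val_nonpos {n d : ℕ} [NeZero n] {ζ : ℂ}
    (hζ : ζ ^ n = 1) {c : ℕ} (hc : ζ ^ c = -1) (s : Fin d) :
    Fintype.card ((Fin d → ZMod n) × (Fin d → ZMod n)) ≤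
      2 * #{a : (Fin d → ZMod n) × (Fin d → ZMod n) | (ζ ^ (a.2 s).val).re ≤ 0} := by
  refine card_le_two_mul_card_filter_of_add _ (0, Pi.single s (c : ZMod n)) fun a ha => ?_
  simp only [Prod.snd_add, Pi.add_apply, Pi.single_eq_same, ZMod.pow_val_add hζ,
    ZMod.pow_val_natCast hζ, hc, mul_neg_one, Complex.neg_re]
  linarith [not_le.mp ha]

lemma card_mul_le_sum_pow_of_le_prod {Ω : Type*} [Fintype Ω] {m : ℕ} (w : Ω → ℝ)
    (hw : ∀ x, 0 ≤ w x) (S : Finset (Fin m → Ω)) {B : ℝ} (hB : ∀ A ∈ S, B ≤ ∏ j, w (A j)) :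
    #S * B ≤ (∑ x, w x) ^ m :=
  calc #S * B = ∑ _A ∈ S, B := by rw [sum_const, nsmul_eq_mul]
    _ ≤ ∑ A ∈ S, ∏ j, w (A j) := sum_le_sum hB
    _ ≤ ∑ A : Fin m → Ω, ∏ j, w (A j) :=
      sum_le_sum_of_subset_of_nonneg (subset_univ S) fun A _ _ => prod_nonneg fun j _ => hw (A j)
    _ = (∑ x, w x) ^ m := (Fintype.sum_pow w m).symm

/-- Chernoff bound: exponential moment with weight `1` on `p` and `t ^ 100` off `p`, where
`t = 1.0001` satisfies `(1 + t ^ 100) / 2 ≤ (1 - 1/20000) * t ^ 51`. -/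
lemma card_filter_card_filter_lt_le {Ω : Type*} [Fintype Ω] (p : Ω → Prop) [DecidablePred p]
    (hp : Fintype.card Ω ≤ 2 * #{x | p x}) (m : ℕ) :
    (#{A : Fin m → Ω | (#{j | p (A j)} : ℝ) < 49 / 100 * m} : ℝ) ≤
      (1 - 1 / 20000) ^ m * Fintype.card Ω ^ m := by
  set t : ℝ := 10001 / 10000
  set w : Ω → ℝ := fun x => if p x then 1 else t ^ 100
  have hw : ∀ x, 0 ≤ w x := fun x => by positivity
  have hsum : ∑ x, w x ≤ (1 - 1 / 20000) * t ^ 51 * Fintype.card Ω := by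
    have hsplit := cast_card_filter_add_cast_card_filter_not p
    have hp' : (Fintype.card Ω : ℝ) ≤ 2 * #{x | p x} := by exact_mod_cast hp
    have ht : (1 + t ^ 100) / 2 ≤ (1 - 1 / 20000) * t ^ 51 := by norm_num [t]
    have ht1 : 1 ≤ t ^ 100 := one_le_pow₀ (by norm_num [t])
    simp only [w, sum_ite, sum_const, nsmul_eq_mul, mul_one]
    nlinarith
  have hbad : ∀ A : Fin m → Ω, (#{j | p (A j)} : ℝ) < 49 / 100 * m →
      (t ^ 51) ^ m ≤ ∏ j, w (A j) := by
    intro A hlt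
    have hsplit := cast_card_filter_add_cast_card_filter_not fun j => p (A j)
    rw [Fintype.card_fin] at hsplit
    have hmany : 51 * m ≤ 100 * #{j | ¬ p (A j)} := by
      have : (51 * m : ℝ) ≤ 100 * #{j | ¬ p (A j)} := by linarith
      exact_mod_cast this
    simp only [w, prod_ite, prod_const_one, prod_const, one_mul, ← pow_mul]
    exact pow_le_pow_right₀ (by norm_num [t]) hmany
  have hpos : (0 : ℝ) < (t ^ 51) ^ m := by positivity
  refine le_of_mul_le_mul_right ?_ hpos
  calc _ ≤ (∑ x, w x) ^ m :=
        card_mul_le_sum_pow_of_le_prod w hw _ fun A hA => hbad A (mem_filter.mp hA).2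
    _ ≤ ((1 - 1 / 20000) * t ^ 51 * Fintype.card Ω) ^ m :=
      pow_le_pow_left₀ (sum_nonneg fun x _ => hw x) hsum m
    _ = (1 - 1 / 20000) ^ m * Fintype.card Ω ^ m * (t ^ 51) ^ m := by
      rw [mul_pow, mul_pow, mul_right_comm]

lemma star_zero_indicator_apply {n d : ℕ} (a : (Fin d → ZMod n) × (Fin d → ZMod n))
    (s : Fin d) :
    star a (0, fun t => if t = s then 1 else 0) s = a.2 s := by
  change a.1 s * 0 + a.2 s * (if s = s then 1 else 0) = a.2 s
  simp

lemma card_filter_not_forall_balanced_le {n d k : ℕ} [NeZero n] (hkn : 2 ^ k ∣ n) (m : ℕ) :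
    (#{A : Fin m → (Fin d → ZMod n) × (Fin d → ZMod n) |
        ¬ ∀ s, balanced (2 ^ k)
          (fun j => star (A j) (0, fun t => if t = s then 1 else 0)) s} : ℝ) ≤
      d * 2 ^ k *
        ((1 - 1 / 20000) ^ m * Fintype.card ((Fin d → ZMod n) × (Fin d → ZMod n)) ^ m) := by
  set Ω := (Fin d → ZMod n) × (Fin d → ZMod n)
  set ρ : ℝ := (1 - 1 / 20000) ^ m * Fintype.card Ω ^ m
  set R : Finset (Fin d × ℕ) := univ ×ˢ Icc 1 (2 ^ k - 1)
  let bad : Fin d × ℕ → Finset (Fin m → Ω) := fun sr =>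
    {A | (#{j | ((rootΔ (2 ^ k) ^ sr.2) ^ ((A j).2 sr.1).val).re ≤ 0} : ℝ) < 49 / 100 * m}
  have hsub : ({A | ¬ ∀ s, balanced (2 ^ k)
      (fun j => star (A j) (0, fun t => if t = s then 1 else 0)) s} : Finset (Fin m → Ω)) ⊆
      R.biUnion bad := by
    intro A hA
    simp only [balanced, star_zero_indicator_apply, mem_filter, mem_univ, true_and, not_forall,
      not_le] at hA
    obtain ⟨s, r, hr1, hr2, hlt⟩ := hA
    simp only [R, bad, mem_biUnion, mem_product, mem_univ, mem_Icc, mem_filter, true_and,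
      ← pow_mul]
    exact ⟨(s, r), ⟨hr1, hr2⟩, hlt⟩
  have hbad : ∀ sr ∈ R, (#(bad sr) : ℝ) ≤ ρ := by
    rintro ⟨s, r⟩ hsr
    simp only [R, mem_product, mem_univ, mem_Icc, true_and] at hsr
    have hζ := isPrimitiveRoot_rootΔ (Δ := 2 ^ k) (by positivity)
    obtain ⟨c, hc⟩ := hζ.exists_pow_pow_eq_neg_one (r := r) (by omega) (by omega)
    have hn : (rootΔ (2 ^ k) ^ r) ^ n = 1 := by
      obtain ⟨q, rfl⟩ := hkn
      rw [← pow_mul, mul_left_comm, pow_mul, hζ.pow_eq_one, one_pow]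
    exact card_filter_card_filter_lt_le _ (card_le_two_mul_card_filter_re_pow_val_nonpos hn hc s) m
  have hR : (#R : ℝ) ≤ d * 2 ^ k := by
    have : #R ≤ d * 2 ^ k := by
      simp only [R, card_product, card_univ, Fintype.card_fin, Nat.card_Icc]
      exact Nat.mul_le_mul_left d (by omega)
    exact_mod_cast this
  calc _ ≤ (#(R.biUnion bad) : ℝ) := by exact_mod_cast card_le_card hsub
    _ ≤ ∑ sr ∈ R, (#(bad sr) : ℝ) := by exact_mod_cast card_biUnion_le
    _ ≤ #R * ρ := by simpa only [nsmul_eq_mul] using sum_le_card_nsmul R _ ρ hbad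
    _ ≤ d * 2 ^ k * ρ := by gcongr

lemma mul_mul_pow_four_mul_pow_le_one {L x y c : ℝ} {m : ℕ} (hL : 1 < L) (hxL : x ≤ L)
    (hy : 0 ≤ y) (hyL : y ≤ L ^ c) (hm : 20000 * (c + 5) * Real.log L ≤ m) :
    x * y * L ^ 4 * (1 - 1 / 20000) ^ m ≤ 1 := by
  have hL0 : 0 < L := by linarith
  have hρ : (1 - 1 / 20000 : ℝ) ^ m ≤ L ^ (-(c + 5)) :=
    calc (1 - 1 / 20000 : ℝ) ^ m ≤ Real.exp (-(1 / 20000)) ^ m :=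
          pow_le_pow_left₀ (by norm_num) (by linarith [Real.add_one_le_exp (-(1 / 20000))]) m
      _ = Real.exp (-(m / 20000)) := by rw [← Real.exp_nat_mul]; ring_nf
      _ ≤ Real.exp (Real.log L * -(c + 5)) := Real.exp_le_exp.mpr (by linarith)
      _ = L ^ (-(c + 5)) := by rw [Real.rpow_def_of_pos hL0]
  have hxyL : x * y * L ^ 4 ≤ L ^ (c + 5) :=
    calc x * y * L ^ 4 ≤ L * L ^ c * L ^ 4 := by gcongr
      _ = L ^ (c + 5) := by
        rw [Real.rpow_add hL0, show (5 : ℝ) = (5 : ℕ) by norm_num, Real.rpow_natCast]; ring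
  calc x * y * L ^ 4 * (1 - 1 / 20000) ^ m ≤ L ^ (c + 5) * L ^ (-(c + 5)) := by gcongr
    _ = 1 := by rw [← Real.rpow_add hL0, add_neg_cancel, Real.rpow_zero]

lemma one_sub_inv_le_card_filter_div {α : Type*} [Fintype α] [Nonempty α] (p : α → Prop)
    [DecidablePred p] {x : ℝ} (hx : 0 < x) (h : #{a | ¬ p a} * x ≤ Fintype.card α) :
    1 - 1 / x ≤ #{a | p a} / Fintype.card α := by
  have hsplit := cast_card_filter_add_cast_card_filter_not p
  have hbad : (#{a | ¬ p a} : ℝ) ≤ Fintype.card α / x := (le_div_iff₀ hx).mpr h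
  rw [le_div_iff₀ (by exact_mod_cast Fintype.card_pos), sub_mul, one_mul, one_div_mul_eq_div]
  linarith

theorem stmt5 (c₁ : ℝ) (hc₁ : 0 < c₁) :
    ∃ C : ℝ, 0 < C ∧ ∃ n₀ : ℕ,
      ∀ (n : ℕ) [NeZero n] (mn d Δ mΔ Acard : ℕ),
        n₀ ≤ n → n = 2 ^ mn → 1 ≤ d → Δ = 2 ^ mΔ → 2 ≤ Δ →
        (Δ : ℝ) ≤ Real.log n ^ c₁ → Δ < n →
        Acard = ⌈C * Real.log (Real.log ((n : ℝ) ^ d))⌉₊ →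
        1 - 1 / Real.log ((n : ℝ) ^ d) ^ 4 ≤
          ((univ.filter
              (fun A : Fin Acard → ((Fin d → ZMod n) × (Fin d → ZMod n)) =>
                ∀ s : Fin d,
                  balanced Δ
                    (fun j => star (A j) (0, fun t => if t = s then 1 else 0)) s)).card : ℝ)
          / (Fintype.card (Fin Acard → ((Fin d → ZMod n) × (Fin d → ZMod n))) : ℝ) := by
  refine ⟨20000 * (c₁ + 5), by positivity, 3, ?_⟩
  intro n _ mn d Δ mΔ m hn3 hn hd hΔ _ hΔlog hΔn hm
  set L := Real.log ((n : ℝ) ^ d)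
  have hlogn : 1 < Real.log n := by
    rw [Real.lt_log_iff_exp_lt (by positivity)]
    have : (3 : ℝ) ≤ n := by exact_mod_cast hn3
    linarith [Real.exp_one_lt_d9]
  have hLd : L = d * Real.log n := Real.log_pow n d
  have hd' : (1 : ℝ) ≤ d := by exact_mod_cast hd
  have hL : 1 < L := by nlinarith
  have hΔL : (Δ : ℝ) ≤ L ^ c₁ :=
    hΔlog.trans (Real.rpow_le_rpow (by positivity) (by nlinarith) hc₁.le)
  have hdvd : 2 ^ mΔ ∣ n := by
    rw [hn] at hΔn ⊢
    exact pow_dvd_pow 2 ((Nat.pow_lt_pow_iff_right (by norm_num)).mp (hΔ ▸ hΔn)).le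
  subst hΔ
  apply one_sub_inv_le_card_filter_div _ (by positivity)
  calc _ ≤ d * 2 ^ mΔ * ((1 - 1 / 20000) ^ m *
          Fintype.card ((Fin d → ZMod n) × (Fin d → ZMod n)) ^ m) * L ^ 4 := by
        gcongr; exact card_filter_not_forall_balanced_le hdvd m
    _ ≤ Fintype.card ((Fin d → ZMod n) × (Fin d → ZMod n)) ^ m := by
        have := mul_mul_pow_four_mul_pow_le_one (x := d) (y := 2 ^ mΔ) (m := m) hL (by nlinarith)
          (by positivity) (by exact_mod_cast hΔL) (by rw [hm]; exact Nat.le_ceil _)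
        calc _ = (d * 2 ^ mΔ * L ^ 4 * (1 - 1 / 20000) ^ m) *
              (Fintype.card ((Fin d → ZMod n) × (Fin d → ZMod n)) ^ m : ℝ) := by ring
          _ ≤ _ := mul_le_of_le_one_left (by positivity) this
    _ = _ := by simp
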